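/- arXiv:math/0412325 — 2 statements merged into one kernel-verified Lean document; each statement's English description precedes it below -/
import Mathlib

section
/- Let D_1 be the degree-zero derivation of the exterior algebra Λ^*(e^2, e^3, ...) over a field K defined by D_1(e^2) = 0 and D_1(e^i) = e^{i-1} for i ≥ 3, extended as a derivation. Then D_1 is surjective. -/
variable (K : Type*) [Field K]

/-- The generator `e^i` (for `i ≥ 2`) of the exterior algebra `Λ^*(e^2, e^3, ...)`. -/
noncomputable def e (i : ℕ) : ExteriorAlgebra K (ℕ →₀ K) :=
  ExteriorAlgebra.ι K (Finsupp.single (i - 2) (1 : K))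

/-- The monomial `e^{i_1} ∧ ... ∧ e^{i_q}` associated to a finite set of indices. -/
noncomputable def mono (s : Finset ℕ) : ExteriorAlgebra K (ℕ →₀ K) :=
  ((s.sort (· ≤ ·)).map (e K)).prod

/-- The span of nonconstant monomials `e^{i_1} ∧ ... ∧ e^{i_q}`, `q ≥ 1`,
`2 ≤ i_1 < ... < i_q` (the positive-degree part of the exterior algebra). -/
noncomputable def Lplus : Submodule K (ExteriorAlgebra K (ℕ →₀ K)) :=
  Submodule.span K {x | ∃ s : Finset ℕ, s.Nonempty ∧ (∀ i ∈ s, 2 ≤ i) ∧ x = mono K s}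

/-!
Write the weight of a product `e^{j_1} ⋯ e^{j_k}` as `j_1 + ⋯ + j_k`; `D` lowers it by one.
For a product `ξ ∧ e^M` the Leibniz rule gives
`ξ ∧ e^M = D(ξ ∧ e^{M+1}) - D(ξ) ∧ e^{M+1}`,
and `D ξ` is a combination of products of smaller weight than `ξ`, so strong induction on
the weight of `ξ` shows that every monomial lies in `D(Lplus)`.
-/

noncomputable def prodE (l : List ℕ) : ExteriorAlgebra K (ℕ →₀ K) :=
  (l.map (e K)).prod

@[simp]
lemma prodE_nil : prodE K [] = 1 := rfl

@[simp]
lemma prodE_cons (a : ℕ) (l : List ℕ) : prodE K (a :: l) = e K a * prodE K l := by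
  simp [prodE]

lemma prodE_append_singleton (l : List ℕ) (M : ℕ) :
    prodE K (l ++ [M]) = prodE K l * e K M := by
  simp [prodE]

lemma mono_eq_prodE_sort (s : Finset ℕ) : mono K s = prodE K (s.sort (· ≤ ·)) := rfl

lemma e_mul_self (a : ℕ) : e K a * e K a = 0 := ExteriorAlgebra.ι_sq_zero _

lemma e_mul_comm (a b : ℕ) : e K a * e K b = -(e K b * e K a) :=
  eq_neg_of_add_eq_zero_left (ExteriorAlgebra.ι_add_mul_swap _ _)

lemma mono_insert_of_lt {a : ℕ} {s : Finset ℕ} (h : ∀ x ∈ s, a < x) :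
    mono K (insert a s) = e K a * mono K s := by
  rw [mono, Finset.sort_insert _ (fun x hx => (h x hx).le) fun ha => (h a ha).false]
  simp [mono]

-- The scalar `c ∈ {0, 1, -1}` records both the reordering sign and the vanishing case `j ∈ s`.
lemma e_mul_mono (j : ℕ) (s : Finset ℕ) :
    ∃ c : K, e K j * mono K s = c • mono K (insert j s) := by
  induction s using Finset.induction_on_min with
  | empty => exact ⟨1, by simp [mono, e]⟩
  | insert a t hat ih =>
    rw [mono_insert_of_lt K hat]
    rcases lt_trichotomy j a with hja | rfl | hja
    · refine ⟨1, ?_⟩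
      rw [one_smul, mono_insert_of_lt K, mono_insert_of_lt K hat]
      intro x hx
      rcases Finset.mem_insert.mp hx with rfl | hx
      exacts [hja, hja.trans (hat x hx)]
    · exact ⟨0, by rw [← mul_assoc, e_mul_self, zero_mul, zero_smul]⟩
    · obtain ⟨c, hc⟩ := ih
      have hajt : ∀ x ∈ insert j t, a < x := by
        intro x hx
        rcases Finset.mem_insert.mp hx with rfl | hx
        exacts [hja, hat x hx]
      refine ⟨-c, ?_⟩
      rw [Finset.insert_comm, mono_insert_of_lt K hajt, ← mul_assoc, e_mul_comm, neg_mul,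
        mul_assoc, hc, mul_smul_comm, neg_smul]

lemma prodE_eq_smul_mono (l : List ℕ) : ∃ c : K, prodE K l = c • mono K l.toFinset := by
  induction l with
  | nil => exact ⟨1, by simp [mono]⟩
  | cons j t ih =>
    obtain ⟨c, hc⟩ := ih
    obtain ⟨c', hc'⟩ := e_mul_mono K j t.toFinset
    exact ⟨c * c', by rw [prodE_cons, hc, mul_smul_comm, hc', smul_smul, List.toFinset_cons]⟩

lemma prodE_mem_Lplus {l : List ℕ} (hne : l ≠ []) (hl : ∀ j ∈ l, 2 ≤ j) :
    prodE K l ∈ Lplus K := by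
  obtain ⟨c, hc⟩ := prodE_eq_smul_mono K l
  rw [hc]
  refine Submodule.smul_mem _ c (Submodule.subset_span ⟨l.toFinset, ?_, ?_, rfl⟩)
  · exact List.toFinset_nonempty_iff l |>.mpr hne
  · exact fun i hi => hl i (List.mem_toFinset.mp hi)

noncomputable def lowerSpan (n : ℕ) : Submodule K (ExteriorAlgebra K (ℕ →₀ K)) :=
  Submodule.span K {x | ∃ l : List ℕ, (∀ j ∈ l, 2 ≤ j) ∧ l.sum < n ∧ x = prodE K l}

lemma e_mul_mem_lowerSpan {j n : ℕ} (hj : 2 ≤ j) {x : ExteriorAlgebra K (ℕ →₀ K)}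
    (hx : x ∈ lowerSpan K n) : e K j * x ∈ lowerSpan K (j + n) := by
  suffices lowerSpan K n ≤ (lowerSpan K (j + n)).comap (LinearMap.mulLeft K (e K j)) from this hx
  refine Submodule.span_le.mpr ?_
  rintro _ ⟨l, hl, hsum, rfl⟩
  refine Submodule.subset_span ⟨j :: l, ?_, by rw [List.sum_cons]; omega, (prodE_cons K j l).symm⟩
  simpa using ⟨hj, hl⟩

section Derivation

variable {K}
variable (D : ExteriorAlgebra K (ℕ →₀ K) →ₗ[K] ExteriorAlgebra K (ℕ →₀ K))
  (hLeib : ∀ x y, D (x * y) = D x * y + x * D y)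
  (h2 : D (e K 2) = 0) (hi : ∀ i, 3 ≤ i → D (e K i) = e K (i - 1))

include hLeib in
lemma map_one_of_leibniz : D 1 = 0 := by
  simpa using hLeib 1 1

include hLeib h2 hi in
lemma map_prodE_mem_lowerSpan {l : List ℕ} (hl : ∀ j ∈ l, 2 ≤ j) :
    D (prodE K l) ∈ lowerSpan K l.sum := by
  induction l with
  | nil => simp [map_one_of_leibniz D hLeib]
  | cons j t ih =>
    simp only [List.forall_mem_cons] at hl
    obtain ⟨hj, ht⟩ := hl
    rw [prodE_cons, hLeib, List.sum_cons]
    refine Submodule.add_mem _ ?_ (e_mul_mem_lowerSpan K hj (ih ht))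
    obtain rfl | hj3 : j = 2 ∨ 3 ≤ j := by omega
    · simp [h2]
    · rw [hi j hj3, ← prodE_cons]
      refine Submodule.subset_span ⟨(j - 1) :: t, ?_, by rw [List.sum_cons]; omega, rfl⟩
      simpa using ⟨by omega, ht⟩

include hLeib h2 hi in
lemma prodE_mem_map_Lplus {l : List ℕ} (hne : l ≠ []) (hl : ∀ j ∈ l, 2 ≤ j) :
    prodE K l ∈ (Lplus K).map D := by
  obtain ⟨l, M, rfl⟩ := (List.eq_nil_or_concat' l).resolve_left hne
  simp only [List.mem_append, List.mem_singleton] at hl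
  induction h : l.sum using Nat.strong_induction_on generalizing l M with
  | _ n ih =>
    have hM : 2 ≤ M := hl M (Or.inr rfl)
    have hleibniz : prodE K (l ++ [M]) =
        D (prodE K (l ++ [M + 1])) - D (prodE K l) * e K (M + 1) := by
      rw [prodE_append_singleton, prodE_append_singleton, hLeib, hi (M + 1) (by omega),
        Nat.add_sub_cancel, add_sub_cancel_left]
    have hlower :
        lowerSpan K n ≤ ((Lplus K).map D).comap (LinearMap.mulRight K (e K (M + 1))) := by
      refine Submodule.span_le.mpr ?_
      rintro _ ⟨l', hl', hlt, rfl⟩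
      simpa [← prodE_append_singleton] using
        ih _ hlt l' (M + 1) (by simp) (fun j hj => hj.elim (hl' j) (by omega)) rfl
    rw [hleibniz]
    refine Submodule.sub_mem _ ⟨_, prodE_mem_Lplus K (by simp) ?_, rfl⟩ ?_
    · simp only [List.mem_append, List.mem_singleton]
      exact fun j hj => hj.elim (fun hj => hl j (Or.inl hj)) (by omega)
    · exact hlower (h ▸ map_prodE_mem_lowerSpan D hLeib h2 hi fun j hj => hl j (Or.inl hj))

end Derivation

/-- Let `D₁` be the degree-zero derivation of `Λ^*(e^2, e^3, ...)` defined by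
`D₁(e^2) = 0`, `D₁(e^i) = e^{i-1}` for `i ≥ 3`, extended by the Leibniz rule.
Then `D₁` is surjective (onto each homogeneous piece, equivalently onto the subspace
spanned by the monomials). -/
theorem stmt3 (D : ExteriorAlgebra K (ℕ →₀ K) →ₗ[K] ExteriorAlgebra K (ℕ →₀ K))
    (hLeib : ∀ x y, D (x * y) = D x * y + x * D y)
    (h2 : D (e K 2) = 0)
    (hi : ∀ i, 3 ≤ i → D (e K i) = e K (i - 1)) :
    ∀ y ∈ Lplus K, ∃ x ∈ Lplus K, D x = y := by
  suffices Lplus K ≤ (Lplus K).map D from fun y hy => this hy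
  refine Submodule.span_le.mpr ?_
  rintro _ ⟨s, hne, hs, rfl⟩
  rw [mono_eq_prodE_sort]
  have hsort : s.sort (· ≤ ·) ≠ [] := List.ne_nil_of_length_pos (by simpa using hne.card_pos)
  exact prodE_mem_map_Lplus D hLeib h2 hi hsort fun j hj => hs j ((Finset.mem_sort _).mp hj)
end

section
/- Define D_{-1} on the exterior algebra Λ^*(e^2, e^3, ...) by D_{-1}(e^i) = e^{i+1} and D_{-1}(ξ ∧ e^i) = Σ_{l≥0} (-1)^l D_1^l(ξ) ∧ e^{i+1+l} for ξ ∈ Λ^*(e^2,...,e^{i-1}). Then D_1 ∘ D_{-1} = Id, so D_{-1} is a right inverse of D_1. -/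
variable (K : Type*) [Field K]

/-- The span of the monomials `e^{i_1} ∧ ... ∧ e^{i_q}` with all indices `i_j` satisfying
`2 ≤ i_j < i` (the subalgebra part `Λ^*(e^2, ..., e^{i-1})`, scalars included). -/
noncomputable def LamBelow (i : ℕ) : Submodule K (ExteriorAlgebra K (ℕ →₀ K)) :=
  Submodule.span K {x | ∃ s : Finset ℕ, (∀ j ∈ s, 2 ≤ j ∧ j < i) ∧ x = mono K s}

/-!
`D₁` lowers the weight `i₁ + ⋯ + i_q` by one, so it is nilpotent on every monomial. Write a
monomial as `ξ ∧ e^m` with `m` its largest index and put `f_l = (-1)^l D₁^l(ξ) ∧ e^{m+l}`. By the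
Leibniz rule `D₁((-1)^l D₁^l(ξ) ∧ e^{m+1+l}) = f_l - f_{l+1}`, so `D₁ (D₋₁ (ξ ∧ e^m))` telescopes
to `f_0 - f_L = ξ ∧ e^m` once `D₁^L ξ = 0`.
-/

open Finset

theorem Finset.sort_insert_of_forall_lt {α : Type*} [LinearOrder α] {s : Finset α} {a : α}
    (h : ∀ b ∈ s, b < a) : (insert a s).sort (· ≤ ·) = s.sort (· ≤ ·) ++ [a] := by
  refine List.Pairwise.eq_of_mem_iff (r := (· < ·)) (sortedLT_sort _).pairwise ?_ ?_
  · rw [List.pairwise_append]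
    exact ⟨(sortedLT_sort s).pairwise, List.pairwise_singleton _ _,
      fun b hb c hc => by rw [List.mem_singleton.mp hc]; exact h b ((mem_sort _).mp hb)⟩
  · intro b
    simp [or_comm]

section WeightFiltration

variable (R : Type*) {A : Type*} [CommSemiring R] [Ring A] [Algebra R A] (g : ℕ → A)

def weightLT (n : ℕ) : Submodule R A :=
  Submodule.span R {x | ∃ L : List ℕ, (∀ j ∈ L, 2 ≤ j) ∧ L.sum < n ∧ x = (L.map g).prod}

variable {R g}

theorem list_prod_mem_weightLT {L : List ℕ} {n : ℕ} (hL : ∀ j ∈ L, 2 ≤ j) (hn : L.sum < n) :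
    (L.map g).prod ∈ weightLT R g n :=
  Submodule.subset_span ⟨L, hL, hn, rfl⟩

theorem weightLT_zero : weightLT R g 0 = ⊥ := by
  rw [eq_bot_iff, weightLT, Submodule.span_le]
  rintro _ ⟨L, -, hL, -⟩
  omega

theorem weightLT_mono : Monotone (weightLT R g) := fun _ _ hnm =>
  Submodule.span_mono fun _ ⟨L, hL, hlt, hx⟩ => ⟨L, hL, hlt.trans_le hnm, hx⟩

-- The truncated `- 1` is harmless: `weightLT _ _ 0 = ⊥`.
theorem mul_mem_weightLT {a b : ℕ} {x y : A} (hx : x ∈ weightLT R g a)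
    (hy : y ∈ weightLT R g b) : x * y ∈ weightLT R g (a + b - 1) := by
  have hmul : weightLT R g a * weightLT R g b ≤ weightLT R g (a + b - 1) := by
    rw [weightLT, weightLT, Submodule.span_mul_span, Submodule.span_le]
    rintro _ ⟨_, ⟨L₁, hL₁, hlt₁, rfl⟩, _, ⟨L₂, hL₂, hlt₂, rfl⟩, rfl⟩
    dsimp only
    rw [← List.prod_append, ← List.map_append]
    refine list_prod_mem_weightLT (fun j hj => ?_) (by rw [List.sum_append]; omega)
    rcases List.mem_append.mp hj with hj | hj
    exacts [hL₁ j hj, hL₂ j hj]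
  exact hmul (Submodule.mul_mem_mul hx hy)

variable {D : Module.End R A}

theorem map_one_eq_zero_of_leibniz (hLeib : ∀ x y, D (x * y) = D x * y + x * D y) : D 1 = 0 := by
  have h := hLeib 1 1
  simp only [mul_one, one_mul] at h
  exact left_eq_add.mp h

theorem apply_list_prod_mem_weightLT (hLeib : ∀ x y, D (x * y) = D x * y + x * D y)
    (hlow : ∀ j, 2 ≤ j → D (g j) ∈ weightLT R g j) :
    ∀ L : List ℕ, (∀ j ∈ L, 2 ≤ j) → D (L.map g).prod ∈ weightLT R g L.sum
  | [], _ => by simp [map_one_eq_zero_of_leibniz hLeib]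
  | j :: L, hL => by
    have hj : 2 ≤ j := hL j List.mem_cons_self
    have hL' : ∀ k ∈ L, 2 ≤ k := fun k hk => hL k (List.mem_cons_of_mem _ hk)
    rw [List.map_cons, List.prod_cons, hLeib, List.sum_cons]
    have hgj : g j ∈ weightLT R g (j + 1) := by
      simpa using list_prod_mem_weightLT (R := R) (g := g) (L := [j]) (by simpa) (lt_add_one j)
    have hleft : D (g j) * (L.map g).prod ∈ weightLT R g (j + L.sum) :=
      weightLT_mono (by omega)
        (mul_mem_weightLT (hlow j hj) (list_prod_mem_weightLT hL' (lt_add_one _)))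
    have hright : g j * D (L.map g).prod ∈ weightLT R g (j + L.sum) :=
      weightLT_mono (by omega)
        (mul_mem_weightLT hgj (apply_list_prod_mem_weightLT hLeib hlow L hL'))
    exact add_mem hleft hright

theorem apply_mem_weightLT_of_mem_weightLT_succ (hLeib : ∀ x y, D (x * y) = D x * y + x * D y)
    (hlow : ∀ j, 2 ≤ j → D (g j) ∈ weightLT R g j) {n : ℕ} {x : A}
    (hx : x ∈ weightLT R g (n + 1)) : D x ∈ weightLT R g n := by
  induction hx using Submodule.span_induction with
  | mem x hx =>
    obtain ⟨L, hL, hlt, rfl⟩ := hx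
    exact weightLT_mono (Nat.le_of_lt_succ hlt) (apply_list_prod_mem_weightLT hLeib hlow L hL)
  | zero => simp
  | add x y _ _ hx hy => rw [map_add]; exact add_mem hx hy
  | smul c x _ hx => rw [map_smul]; exact Submodule.smul_mem _ c hx

theorem pow_apply_eq_zero_of_mem_weightLT (hLeib : ∀ x y, D (x * y) = D x * y + x * D y)
    (hlow : ∀ j, 2 ≤ j → D (g j) ∈ weightLT R g j) {n l : ℕ} (hnl : n ≤ l) {x : A}
    (hx : x ∈ weightLT R g n) : (D ^ l) x = 0 := by
  obtain ⟨k, rfl⟩ := Nat.exists_eq_add_of_le' hnl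
  rw [pow_add, Module.End.mul_apply]
  suffices ∀ n, ∀ x ∈ weightLT R g n, (D ^ n) x = 0 by rw [this n x hx, map_zero]
  intro n
  induction n with
  | zero => simp [weightLT_zero]
  | succ n ih =>
    intro x hx
    rw [pow_succ, Module.End.mul_apply]
    exact ih _ (apply_mem_weightLT_of_mem_weightLT_succ hLeib hlow hx)

end WeightFiltration

theorem apply_sum_alternating_mul_shift {R A : Type*} [CommRing R] [Ring A] [Algebra R A]
    {D : Module.End R A} (hLeib : ∀ x y, D (x * y) = D x * y + x * D y) {g : ℕ → A} {i : ℕ}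
    (hshift : ∀ l, D (g (i + 1 + l)) = g (i + l)) {ξ : A} {L : ℕ} (hL : (D ^ L) ξ = 0) :
    D (∑ l ∈ range L, ((-1 : R) ^ l) • ((D ^ l) ξ * g (i + 1 + l))) = ξ * g i := by
  set f : ℕ → A := fun l => ((-1 : R) ^ l) • ((D ^ l) ξ * g (i + l))
  have hterm (l : ℕ) : D (((-1 : R) ^ l) • ((D ^ l) ξ * g (i + 1 + l))) = f l - f (l + 1) := by
    have hDpow : D ((D ^ l) ξ) = (D ^ (l + 1)) ξ := by rw [pow_succ', Module.End.mul_apply]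
    simp only [f, map_smul, hLeib, hDpow, hshift, pow_succ, mul_neg_one, neg_smul, smul_add,
      show i + (l + 1) = i + 1 + l by omega]
    abel
  rw [map_sum, sum_congr rfl fun l _ => hterm l, sum_range_sub' f L]
  simp [f, hL]

section

variable {K}

theorem mono_eq_mono_erase_max'_mul {s : Finset ℕ} (hs : s.Nonempty) :
    mono K s = mono K (s.erase (s.max' hs)) * e K (s.max' hs) := by
  conv_lhs => rw [← insert_erase (s.max'_mem hs)]
  rw [mono, sort_insert_of_forall_lt fun b hb => lt_max'_of_mem_erase_max' s hs hb]
  simp [mono]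

end

theorem stmt4 (D Dm : Module.End K (ExteriorAlgebra K (ℕ →₀ K)))
    (hLeib : ∀ x y, D (x * y) = D x * y + x * D y)
    (h2 : D (e K 2) = 0)
    (hi : ∀ i, 3 ≤ i → D (e K i) = e K (i - 1))
    (hm2 : ∀ i, 2 ≤ i → ∀ ξ ∈ LamBelow K i, ∀ L : ℕ,
      (∀ l, L ≤ l → (D ^ l) ξ = 0) →
      Dm (ξ * e K i) =
        ∑ l ∈ Finset.range L, ((-1 : K) ^ l) • ((D ^ l) ξ * e K (i + 1 + l))) :
    ∀ y ∈ Lplus K, D (Dm y) = y := by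
  have hlow (j : ℕ) (hj : 2 ≤ j) : D (e K j) ∈ weightLT K (e K) j := by
    rcases hj.eq_or_lt with rfl | hj
    · simp [h2]
    · rw [hi j hj]
      simpa using list_prod_mem_weightLT (R := K) (g := e K) (L := [j - 1]) (by simp; omega)
        (by simp; omega)
  intro y hy
  induction hy using Submodule.span_induction with
  | mem x hx =>
    obtain ⟨s, hne, hs, rfl⟩ := hx
    set m := s.max' hne
    set t := s.erase m
    have hm : 2 ≤ m := hs m (max'_mem s hne)
    have ht : ∀ j ∈ t, 2 ≤ j ∧ j < m := fun j hj =>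
      ⟨hs j (mem_of_mem_erase hj), lt_max'_of_mem_erase_max' s hne hj⟩
    have hnil (l : ℕ) (hl : (t.sort (· ≤ ·)).sum + 1 ≤ l) : (D ^ l) (mono K t) = 0 :=
      pow_apply_eq_zero_of_mem_weightLT hLeib hlow hl
        (list_prod_mem_weightLT (fun j hj => (ht j ((mem_sort _).mp hj)).1) (lt_add_one _))
    have hshift (l : ℕ) : D (e K (m + 1 + l)) = e K (m + l) := by
      rw [hi _ (by omega)]
      congr 1
      omega
    rw [mono_eq_mono_erase_max'_mul hne, hm2 m hm _
      (Submodule.subset_span ⟨t, ht, rfl⟩) _ hnil]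
    exact apply_sum_alternating_mul_shift hLeib hshift (hnil _ le_rfl)
  | zero => simp
  | add x y _ _ hx hy => rw [map_add, map_add, hx, hy]
  | smul c x _ hx => rw [map_smul, map_smul, hx]
end
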